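/- arXiv:math/9210220 — 9 statements merged into one kernel-verified Lean document; each statement's English description precedes it below -/
import Mathlib

section
/- A Borel set S ⊆ ℝⁿ has Lebesgue measure zero if and only if S is shy, i.e., there exists a Borel measure μ on ℝⁿ satisfying 0 < μ(U) < ∞ for some compact set U, such that μ(S + v) = 0 for every v ∈ ℝⁿ. -/
/-!
If `ν` is a nonzero measure annihilating every translate of `S`, Tonelli applied to
`{(v, y) | y + v ∈ S}` under `μ × ν`, with `μ` left invariant, computes its measure once as
`∫ ν (S - v) dμ(v) = 0` and once as `μ S * ν univ`; hence `μ S = 0`. Conversely, Lebesgue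
measure itself is transverse to every Lebesgue-null set.
-/

open MeasureTheory Set

namespace MeasureTheory

variable {G : Type*} [MeasurableSpace G] [AddGroup G] [MeasurableAdd₂ G]
  (μ ν : Measure G) [SFinite μ] [SFinite ν] [μ.IsAddLeftInvariant] {S : Set G}

theorem measure_mul_measure_univ_eq_lintegral_measure_preimage_add_right
    (hS : MeasurableSet S) :
    μ S * ν univ = ∫⁻ v, ν ((· + v) ⁻¹' S) ∂μ := by
  have hT : MeasurableSet {p : G × G | p.2 + p.1 ∈ S} := (measurable_snd.add measurable_fst) hS
  calc μ S * ν univ = ∫⁻ y, μ ((y + ·) ⁻¹' S) ∂ν := by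
        simp only [measure_preimage_add, lintegral_const]
    _ = (μ.prod ν) {p : G × G | p.2 + p.1 ∈ S} := (Measure.prod_apply_symm hT).symm
    _ = ∫⁻ v, ν ((· + v) ⁻¹' S) ∂μ := Measure.prod_apply hT

theorem measure_eq_zero_of_forall_measure_image_add_right_eq_zero
    (hS : MeasurableSet S) (hν : ν ≠ 0) (h : ∀ v, ν ((· + v) '' S) = 0) : μ S = 0 := by
  have hpre : ∀ v, ν ((· + v) ⁻¹' S) = 0 := fun v => by
    simpa only [image_add_right, neg_neg] using h (-v)
  simpa only [hpre, lintegral_zero, mul_eq_zero, Measure.measure_univ_eq_zero, hν, or_false]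
    using measure_mul_measure_univ_eq_lintegral_measure_preimage_add_right μ ν hS

end MeasureTheory

/-- A Borel set `S ⊆ ℝⁿ` has Lebesgue measure zero iff it is shy, i.e. there is a
Borel measure `μ`, positive and finite on some compact set, annihilating every
translate of `S`. -/
theorem stmt_1 (n : ℕ) (S : Set (EuclideanSpace ℝ (Fin n))) (hS : MeasurableSet S) :
    volume S = 0 ↔
      ∃ μ : Measure (EuclideanSpace ℝ (Fin n)),
        (∃ U : Set (EuclideanSpace ℝ (Fin n)), IsCompact U ∧ 0 < μ U ∧ μ U < ⊤) ∧
        ∀ v : EuclideanSpace ℝ (Fin n), μ ((fun x => x + v) '' S) = 0 := by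
  constructor
  · intro hvol
    refine ⟨volume, ⟨Metric.closedBall 0 1, isCompact_closedBall 0 1,
      Metric.measure_closedBall_pos volume 0 one_pos, measure_closedBall_lt_top⟩, fun v => ?_⟩
    rw [image_add_right, measure_preimage_add_right, hvol]
  · rintro ⟨μ, ⟨U, -, hUpos, hUfin⟩, hnull⟩
    have : IsFiniteMeasure (μ.restrict U) := isFiniteMeasure_restrict.mpr hUfin.ne
    exact measure_eq_zero_of_forall_measure_image_add_right_eq_zero volume (μ.restrict U) hS
      (Measure.restrict_eq_zero.not.mpr hUpos.ne') fun v =>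
        nonpos_iff_eq_zero.mp ((Measure.restrict_le_self _).trans_eq (hnull v))
end

section
/- If a Borel set S in a complete metric linear space V admits a transverse measure, then it admits a transverse measure that is finite, has compact support, and whose support has diameter less than any prescribed ε > 0. -/
/-!
Restricting a transverse measure to a compact set of positive measure keeps it transverse, and
makes it finite with compact support. A compact set of positive measure contains a point every
relative neighbourhood of which has positive measure, so the trace of a small closed ball around
that point is a compact set of positive measure and small diameter.
-/

open MeasureTheory Metric Set

variable {V : Type*} [AddCommGroup V] [Module ℝ V] [MetricSpace V] [CompleteSpace V]
  [IsTopologicalAddGroup V] [ContinuousSMul ℝ V] [MeasurableSpace V] [BorelSpace V]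

/-- A measure `μ` (nonnegative Borel, not identically zero) is transverse to a Borel
set `S`: it is positive and finite on some compact set and annihilates every
translate of `S`. -/
def Transverse (μ : Measure V) (S : Set V) : Prop :=
  (∃ U : Set V, IsCompact U ∧ 0 < μ U ∧ μ U < ⊤) ∧
  ∀ v : V, μ ((fun x => x + v) '' S) = 0

open Topology

theorem IsCompact.exists_isCompact_subset_measure_ne_zero_ediam_le {X : Type*}
    [PseudoEMetricSpace X] [MeasurableSpace X] {μ : Measure X} {U : Set X} (hU : IsCompact U)
    (hμU : μ U ≠ 0) {r : ENNReal} (hr : 0 < r) :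
    ∃ K ⊆ U, IsCompact K ∧ μ K ≠ 0 ∧ ediam K ≤ 2 * r := by
  have hsupport : ∃ x ∈ U, ∀ t ∈ 𝓝[U] x, μ t ≠ 0 := by
    contrapose! hμU
    exact hU.measure_zero_of_nhdsWithin hμU
  obtain ⟨x, -, hx⟩ := hsupport
  refine ⟨U ∩ closedEBall x r, inter_subset_left, hU.inter_right isClosed_closedEBall,
    hx _ (inter_mem_nhdsWithin U (closedEBall_mem_nhds x hr)), ?_⟩
  exact (ediam_mono inter_subset_right).trans ediam_closedEBall_le

omit [Module ℝ V] [CompleteSpace V] [IsTopologicalAddGroup V] [ContinuousSMul ℝ V]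
  [BorelSpace V] in
theorem Transverse.restrict {μ : Measure V} {S : Set V} (hμ : Transverse μ S) {K : Set V}
    (hK : IsCompact K) (hμK : μ K ≠ 0) (hμK_fin : μ K ≠ ⊤) : Transverse (μ.restrict K) S := by
  refine ⟨⟨K, hK, ?_, ?_⟩, fun v => nonpos_iff_eq_zero.1 ?_⟩
  · rw [Measure.restrict_apply_self]
    exact pos_iff_ne_zero.2 hμK
  · rw [Measure.restrict_apply_self]
    exact hμK_fin.lt_top
  · exact (Measure.restrict_apply_le _ _).trans_eq (hμ.2 v)

theorem stmt_2_general (S : Set V) (h : ∃ μ : Measure V, Transverse μ S) (ε : ℝ) (hε : 0 < ε) :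
    ∃ ν : Measure V, Transverse ν S ∧ IsFiniteMeasure ν ∧
      ∃ K : Set V, IsCompact K ∧ ν Kᶜ = 0 ∧ EMetric.diam K < ENNReal.ofReal ε := by
  obtain ⟨μ, hμ⟩ := h
  obtain ⟨U, hU, hμU, hμU_fin⟩ := hμ.1
  obtain ⟨K, hKU, hK, hμK, hdiam⟩ := hU.exists_isCompact_subset_measure_ne_zero_ediam_le
    hμU.ne' (r := ENNReal.ofReal (ε / 3)) (by simpa using hε)
  have hμK_fin : μ K ≠ ⊤ := ((measure_mono hKU).trans_lt hμU_fin).ne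
  refine ⟨μ.restrict K, hμ.restrict hK hμK hμK_fin, isFiniteMeasure_restrict.2 hμK_fin, K, hK,
    mem_ae_iff.1 (ae_restrict_mem hK.measurableSet), hdiam.trans_lt ?_⟩
  rw [← ENNReal.ofReal_ofNat 2, ← ENNReal.ofReal_mul zero_le_two,
    ENNReal.ofReal_lt_ofReal_iff hε]
  linarith

/-- If a Borel set `S` in a complete metric linear space admits a transverse measure,
then for every `ε > 0` it admits a transverse measure which is finite, has compact
support, and whose support has diameter less than `ε`. -/
theorem stmt_2 (S : Set V) (hS : MeasurableSet S)
    (h : ∃ μ : Measure V, Transverse μ S) (ε : ℝ) (hε : 0 < ε) :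
    ∃ ν : Measure V, Transverse ν S ∧ IsFiniteMeasure ν ∧
      ∃ K : Set V, IsCompact K ∧ ν Kᶜ = 0 ∧ EMetric.diam K < ENNReal.ofReal ε :=
  stmt_2_general S h ε hε
end

section
/- If a Borel set S in a complete metric linear space admits an essentially transverse measure — a measure μ, finite and positive on some compact set, such that μ(S + v) = 0 for a prevalent set of v — then S is shy. -/
/-!
Restrict `μ` to a compact set `U` on which it is positive and finite, and let `ν`, restricted to
a compact set `W`, be transverse to a Borel set `T` containing the bad translates
`{v | μ (S + v) ≠ 0}`. The measure `λ E = ∫ μ (E + y) dν(y)`, a convolution of `μ` with the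
reflection of `ν`, gives `U - W` the mass `μ U * ν W`, and
`λ (S + v) = ∫ μ (S + v + y) dν(y)` vanishes since `y + v ∉ T` for `ν`-almost every `y`.
The delicate point is the measurability of `y ↦ μ (E + y)`: `V` need not be separable, so the
product σ-algebra does not help; instead the compact support of `μ` makes this map lower
semicontinuous for open `E`, and the Borel sets are generated from the open ones.
-/

open MeasureTheory Set
open scoped Pointwise

variable {V : Type*} [AddCommGroup V] [Module ℝ V] [MetricSpace V] [CompleteSpace V]
  [IsTopologicalAddGroup V] [ContinuousSMul ℝ V] [MeasurableSpace V] [BorelSpace V]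

/-- A set `S` is shy if it is contained in a Borel set admitting a transverse measure. -/
def Shy (S : Set V) : Prop :=
  ∃ T : Set V, S ⊆ T ∧ MeasurableSet T ∧
    ∃ μ : Measure V, (∃ U : Set V, IsCompact U ∧ 0 < μ U ∧ μ U < ⊤) ∧
      ∀ v : V, μ ((fun x => x + v) '' T) = 0

/-- A set is prevalent if its complement is shy. -/
def Prevalent (S : Set V) : Prop := Shy Sᶜ

theorem IsCompact.sub {G : Type*} [AddGroup G] [TopologicalSpace G] [IsTopologicalAddGroup G]
    {U W : Set G} (hU : IsCompact U) (hW : IsCompact W) : IsCompact (U - W) :=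
  sub_eq_add_neg U W ▸ hU.add hW.neg

section Translates

variable {G : Type*} [AddGroup G] [TopologicalSpace G] [IsTopologicalAddGroup G]
  [MeasurableSpace G] {μ : Measure G} {U : Set G}

theorem lowerSemicontinuous_measure_preimage_sub_right [μ.WeaklyRegular] (hU : IsCompact U)
    (hμU : μ Uᶜ = 0) {O : Set G} (hO : IsOpen O) :
    LowerSemicontinuous fun y => μ ((· - y) ⁻¹' O) := by
  intro y c hc
  obtain ⟨F, hFO, hF, hcF⟩ := (hO.preimage (continuous_sub_right y)).exists_lt_isClosed hc
  have hK : IsCompact ((· - y) '' (F ∩ U)) := (hU.inter_left hF).image (continuous_sub_right y)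
  obtain ⟨N, hN, hKN⟩ := compact_open_separated_add_right hK hO
    (image_subset_iff.2 (inter_subset_left.trans hFO))
  have hnear : ∀ᶠ y' in nhds y, y - y' ∈ N :=
    (continuous_const.sub continuous_id).continuousAt.preimage_mem_nhds (by simpa using hN)
  filter_upwards [hnear] with y' hy'
  calc c < μ F := hcF
    _ = μ (F ∩ U) := (measure_inter_conull hμU).symm
    _ ≤ μ ((· - y') ⁻¹' O) := measure_mono fun x hx => by
      simpa using hKN (add_mem_add (mem_image_of_mem (· - y) hx) hy')

theorem measurable_measure_preimage_sub_right [BorelSpace G] [IsFiniteMeasure μ] [μ.WeaklyRegular]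
    (hU : IsCompact U) (hμU : μ Uᶜ = 0) {E : Set G} (hE : MeasurableSet E) :
    Measurable fun y => μ ((· - y) ⁻¹' E) := by
  induction E, hE using MeasurableSet.induction_on_open with
  | isOpen O hO => exact (lowerSemicontinuous_measure_preimage_sub_right hU hμU hO).measurable
  | compl E hE ih =>
    simp_rw [preimage_compl,
      measure_compl (hE.preimage (measurable_sub_const _)) (measure_ne_top _ _)]
    exact measurable_const.sub ih
  | iUnion f hdisj hf ih =>
    simp_rw [preimage_iUnion, measure_iUnion (fun i j hij => (hdisj hij).preimage _)
      (fun i => (hf i).preimage (measurable_sub_const _))]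
    exact Measurable.tsum ih

theorem measurable_map_sub_right [BorelSpace G] [IsFiniteMeasure μ] [μ.WeaklyRegular]
    (hU : IsCompact U) (hμU : μ Uᶜ = 0) :
    Measurable fun y => μ.map (· - y) :=
  Measure.measurable_of_measurable_coe _ fun E hE => by
    simp_rw [Measure.map_apply (measurable_sub_const _) hE]
    exact measurable_measure_preimage_sub_right hU hμU hE

theorem bind_map_sub_right_apply_sub [BorelSpace G] [T2Space G] (hU : IsCompact U)
    {ν : Measure G} {W : Set G} (hW : IsCompact W)
    (hmap : Measurable fun y => (μ.restrict U).map (· - y)) :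
    ((ν.restrict W).bind fun y => (μ.restrict U).map (· - y)) (U - W) = μ U * ν W := by
  have hUW : MeasurableSet (U - W) := (hU.sub hW).isClosed.measurableSet
  rw [Measure.bind_apply hUW hmap.aemeasurable, ← setLIntegral_const]
  refine setLIntegral_congr_fun hW.isClosed.measurableSet fun y hy => ?_
  rw [Measure.map_apply (measurable_sub_const _) hUW,
    Measure.restrict_apply (hUW.preimage (measurable_sub_const _)),
    inter_eq_right.2 (show U ⊆ (· - y) ⁻¹' (U - W) from fun x hx => sub_mem_sub hx hy)]

theorem bind_map_sub_right_apply_eq_zero [BorelSpace G] {ν : Measure G}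
    (hmap : Measurable fun y => μ.map (· - y)) {E : Set G}
    (hE : MeasurableSet E) (h : ∀ᵐ y ∂ν, μ ((· - y) ⁻¹' E) = 0) :
    (ν.bind fun y => μ.map (· - y)) E = 0 := by
  rw [Measure.bind_apply hE hmap.aemeasurable, ← lintegral_zero (μ := ν)]
  exact lintegral_congr_ae <|
    h.mono fun y hy => (Measure.map_apply (measurable_sub_const _) hE).trans hy

end Translates

set_option linter.unusedSectionVars false

/-- If a Borel set `S` admits an essentially transverse measure — a measure positive
and finite on some compact set such that `μ(S + v) = 0` for a prevalent set of `v` —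
then `S` is shy. -/
theorem stmt_6 (S : Set V) (hS : MeasurableSet S)
    (h : ∃ μ : Measure V, (∃ U : Set V, IsCompact U ∧ 0 < μ U ∧ μ U < ⊤) ∧
      Prevalent {v : V | μ ((fun x => x + v) '' S) = 0}) :
    Shy S := by
  obtain ⟨μ, ⟨U, hU, hμU, hμU'⟩, T, hT, -, ν, ⟨W, hW, hνW, hνW'⟩, hνT⟩ := h
  have : IsFiniteMeasure (μ.restrict U) := isFiniteMeasure_restrict.2 hμU'.ne
  have hmap : Measurable fun y => (μ.restrict U).map (· - y) :=
    measurable_map_sub_right hU <| by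
      rw [Measure.restrict_apply' hU.isClosed.measurableSet, compl_inter_self, measure_empty]
  have hUW := bind_map_sub_right_apply_sub hU (ν := ν) hW hmap
  refine ⟨S, subset_rfl, hS, (ν.restrict W).bind fun y => (μ.restrict U).map (· - y),
    ⟨U - W, hU.sub hW, hUW ▸ ENNReal.mul_pos hμU.ne' hνW.ne',
      hUW ▸ ENNReal.mul_lt_top hμU' hνW'⟩,
    fun v => ?_⟩
  have hSv : MeasurableSet ((· + v) '' S) := by
    rw [image_add_right]; exact hS.preimage (measurable_add_const _)
  have hTv : ∀ᵐ y ∂ν.restrict W, y + v ∉ T := ae_restrict_of_ae <|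
    (measure_eq_zero_iff_ae_notMem.1 (hνT (-v))).mono fun y hy hyT => hy ⟨y + v, hyT, by simp⟩
  refine bind_map_sub_right_apply_eq_zero hmap hSv (hTv.mono fun y hy => ?_)
  have hμ : μ ((· + (y + v)) '' S) = 0 := by_contra fun h => hy (hT h)
  have hpre : (· - y) ⁻¹' ((· + v) '' S) = (· + (y + v)) '' S := by
    simp only [image_add_right, preimage_preimage]
    congr! 2 with x
    abel
  rw [hpre]
  exact nonpos_iff_eq_zero.1 ((Measure.restrict_apply_le _ _).trans hμ.le)
end

section
/- In an infinite-dimensional complete metric linear space V, every compact subset is shy. In fact, for every compact S ⊆ V there exists a vector v ∈ V spanning a line L such that every translate of L intersects S in at most one point. -/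
/-!
A compact set with nonempty interior makes a topological vector space locally compact, hence
finite-dimensional by Riesz's theorem. So in infinite dimensions, by Baire, some `v` avoids all
the compact sets `{α (x - y) : |α| ≤ n, x, y ∈ S}`; then no line `w + ℝ v` meets `S` twice,
since `v = (t - t')⁻¹ ((w + t v) - (w + t' v))`. Lebesgue measure on a segment of `ℝ v` is then
a transverse measure for `S`.
-/

open MeasureTheory Set

variable {V : Type*} [AddCommGroup V] [Module ℝ V] [MetricSpace V] [CompleteSpace V]
  [IsTopologicalAddGroup V] [ContinuousSMul ℝ V] [MeasurableSpace V] [BorelSpace V]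

section Riesz

variable {𝕜 E : Type*} [NontriviallyNormedField 𝕜] [CompleteSpace 𝕜] [AddCommGroup E]
  [Module 𝕜 E] [TopologicalSpace E] [T2Space E] [IsTopologicalAddGroup E] [ContinuousSMul 𝕜 E]

theorem IsCompact.interior_eq_empty_of_not_finiteDimensional (hdim : ¬ FiniteDimensional 𝕜 E)
    {K : Set E} (hK : IsCompact K) : interior K = ∅ := by
  refine eq_empty_iff_forall_notMem.2 fun x hx => hdim ?_
  have := hK.locallyCompactSpace_of_mem_nhds_of_addGroup (mem_interior_iff_mem_nhds.1 hx)
  exact .of_locallyCompactSpace 𝕜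

theorem exists_forall_notMem_of_isCompact_of_not_finiteDimensional [BaireSpace E]
    (hdim : ¬ FiniteDimensional 𝕜 E) {K : ℕ → Set E} (hK : ∀ n, IsCompact (K n)) :
    ∃ v, ∀ n, v ∉ K n := by
  by_contra! hcover
  obtain ⟨n, hn⟩ := nonempty_interior_of_iUnion_of_closed (fun n => (hK n).isClosed)
    (eq_univ_of_forall fun v => mem_iUnion.2 (hcover v))
  exact hn.ne_empty ((hK n).interior_eq_empty_of_not_finiteDimensional hdim)

end Riesz

theorem exists_ne_zero_forall_lineSection_subsingleton {E : Type*} [AddCommGroup E] [Module ℝ E]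
    [TopologicalSpace E] [T2Space E] [IsTopologicalAddGroup E] [ContinuousSMul ℝ E] [BaireSpace E]
    (hdim : ¬ FiniteDimensional ℝ E) {S : Set E} (hS : IsCompact S) :
    ∃ v : E, v ≠ 0 ∧ ∀ w : E, {t : ℝ | w + t • v ∈ S}.Subsingleton := by
  obtain ⟨v, hv⟩ := exists_forall_notMem_of_isCompact_of_not_finiteDimensional hdim
    (K := fun n : ℕ => insert 0
      ((fun p : ℝ × E × E => p.1 • (p.2.1 - p.2.2)) '' (Icc (-n : ℝ) n ×ˢ S ×ˢ S)))
    fun n => ((isCompact_Icc.prod (hS.prod hS)).image (by fun_prop)).insert 0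
  refine ⟨v, fun hv0 => hv 0 (by simp [hv0]), fun w t ht t' ht' => ?_⟩
  by_contra hne
  have hdiff : (w + t • v) - (w + t' • v) = (t - t') • v := by
    rw [sub_smul]; abel
  refine hv ⌈|(t - t')⁻¹|⌉₊ (mem_insert_of_mem _
    ⟨((t - t')⁻¹, w + t • v, w + t' • v), ⟨abs_le.mp (Nat.le_ceil _), ht, ht'⟩, ?_⟩)
  change (t - t')⁻¹ • ((w + t • v) - (w + t' • v)) = v
  rw [hdiff, smul_smul, inv_mul_cancel₀ (sub_ne_zero.mpr hne), one_smul]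

theorem shy_of_forall_lineSection_null {E : Type*} [AddCommGroup E] [Module ℝ E] [MetricSpace E]
    [IsTopologicalAddGroup E] [ContinuousSMul ℝ E] [MeasurableSpace E] [BorelSpace E]
    {S : Set E} (hS : MeasurableSet S) (v : E)
    (hnull : ∀ w : E, volume {t : ℝ | w + t • v ∈ S} = 0) : Shy S := by
  have hline : Measurable fun t : ℝ => t • v := by fun_prop
  let μ := (volume.restrict (Icc (0 : ℝ) 1)).map fun t : ℝ => t • v
  let U := (fun t : ℝ => t • v) '' Icc 0 1
  have hU : IsCompact U := isCompact_Icc.image (by fun_prop)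
  have hμU : 0 < μ U := by
    rw [Measure.map_apply hline hU.isClosed.measurableSet]
    calc (0 : ENNReal) < volume.restrict (Icc (0 : ℝ) 1) (Icc 0 1) := by simp
      _ ≤ _ := measure_mono (subset_preimage_image _ _)
  refine ⟨S, subset_rfl, hS, μ, ⟨U, hU, hμU, measure_lt_top μ U⟩, fun u => ?_⟩
  rw [image_add_right, Measure.map_apply hline (hS.preimage (measurable_add_const _))]
  refine measure_mono_null (fun t ht => ?_) (nonpos_iff_eq_zero.1
    ((Measure.restrict_apply_le _ _).trans (hnull (-u)).le))
  rw [mem_ofPred_eq, add_comm]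
  exact ht

/-- In an infinite-dimensional complete metric linear space every compact set `S` is
shy; in fact there is a nonzero vector `v` (spanning a line `L`) such that every
translate of `L` meets `S` in at most one point. -/
theorem stmt_8 (hdim : ¬ FiniteDimensional ℝ V) (S : Set V) (hS : IsCompact S) :
    Shy S ∧ ∃ v : V, v ≠ 0 ∧ ∀ w : V, {t : ℝ | w + t • v ∈ S}.Subsingleton := by
  obtain ⟨v, hv0, hline⟩ := exists_ne_zero_forall_lineSection_subsingleton hdim hS
  exact ⟨shy_of_forall_lineSection_null hS.isClosed.measurableSet v
    fun w => (hline w).measure_zero _, v, hv0, hline⟩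
end

section
/- In an infinite-dimensional complete metric linear space, every proper closed linear subspace is shy. -/
open MeasureTheory Set

variable {V : Type*} [AddCommGroup V] [Module ℝ V] [MetricSpace V] [CompleteSpace V]
  [IsTopologicalAddGroup V] [ContinuousSMul ℝ V] [MeasurableSpace V] [BorelSpace V]

/-! Lebesgue measure on the segment `[0, 1] • w` is a probe for every Borel set meeting each line
parallel to `w` in a null set; a translate of a subspace `W ∌ w` meets such a line at most once. -/

theorem Submodule.subsingleton_setOf_smul_add_mem {K M : Type*} [Field K] [AddCommGroup M]
    [Module K M] (W : Submodule K M) {w : M} (hw : w ∉ W) (u : M) :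
    {t : K | t • w + u ∈ W}.Subsingleton := by
  intro t₁ h₁ t₂ h₂
  by_contra hne
  have hdiff : (t₁ - t₂) • w ∈ W := by
    simpa [sub_smul] using W.sub_mem h₁ h₂
  exact hw ((W.smul_mem_iff (sub_ne_zero.2 hne)).1 hdiff)

theorem shy_of_volume_setOf_smul_add_mem {E : Type*} [AddCommGroup E] [Module ℝ E]
    [MetricSpace E] [ContinuousAdd E] [ContinuousSMul ℝ E] [MeasurableSpace E] [BorelSpace E]
    {T : Set E} (hT : MeasurableSet T) (w : E)
    (hline : ∀ v : E, volume {t : ℝ | t • w + v ∈ T} = 0) : Shy T := by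
  have hf : Continuous fun t : ℝ => t • w := continuous_id.smul continuous_const
  set ν : Measure ℝ := volume.restrict (Icc 0 1)
  have hU : IsCompact ((· • w) '' Icc (0 : ℝ) 1) := isCompact_Icc.image hf
  refine ⟨T, subset_rfl, hT, ν.map (· • w), ⟨_, hU, ?_, measure_lt_top _ _⟩, fun v => ?_⟩
  · rw [Measure.map_apply hf.measurable hU.isClosed.measurableSet]
    calc (0 : ENNReal) < ν (Icc 0 1) := by simp [ν]
      _ ≤ _ := measure_mono (subset_preimage_image _ _)
  · rw [image_add_right, Measure.map_apply hf.measurable (hT.preimage (measurable_add_const _))]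
    exact nonpos_iff_eq_zero.1 ((Measure.restrict_le_self _).trans (hline (-v)).le)

theorem stmt_9_general (W : Submodule ℝ V)
    (hclosed : IsClosed (W : Set V)) (hproper : W ≠ ⊤) :
    Shy (W : Set V) := by
  obtain ⟨w, hw⟩ := SetLike.exists_not_mem_of_ne_top W hproper
  exact shy_of_volume_setOf_smul_add_mem hclosed.measurableSet w fun v =>
    (W.subsingleton_setOf_smul_add_mem hw v).measure_zero volume

/-- In an infinite-dimensional complete metric linear space, every proper closed
linear subspace is shy. -/
theorem stmt_9 (hdim : ¬ FiniteDimensional ℝ V) (W : Submodule ℝ V)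
    (hclosed : IsClosed (W : Set V)) (hproper : W ≠ ⊤) :
    Shy (W : Set V) :=
  stmt_9_general W hclosed hproper
end

section
/- For 1 < p ≤ ∞, the set of sequences (aᵢ) ∈ ℓᵖ such that the series Σ aᵢ diverges is prevalent in ℓᵖ. -/
open MeasureTheory Set Filter

/-- A subset of a topological vector space is shy if it is contained in a Borel set
admitting a transverse measure. -/
def ShyIn {V : Type*} [TopologicalSpace V] [AddCommGroup V] (S : Set V) : Prop :=
  letI : MeasurableSpace V := borel V
  ∃ T : Set V, S ⊆ T ∧ MeasurableSet T ∧
    ∃ μ : Measure V, (∃ U : Set V, IsCompact U ∧ 0 < μ U ∧ μ U < ⊤) ∧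
      ∀ v : V, μ ((fun x => x + v) '' T) = 0

/-- A set is prevalent if its complement is shy. -/
def PrevalentIn {V : Type*} [TopologicalSpace V] [AddCommGroup V] (S : Set V) : Prop :=
  ShyIn Sᶜ

/-! The probe `v = (1/(i+1))ᵢ` lies in `ℓᵖ` because `p > 1`. Push Lebesgue measure on `[0,1]`
forward to the segment `[0,1]·v`. Every line `w + ℝv` meets the Borel set of convergent series in
at most one point: if `Σ (wᵢ + s vᵢ)` and `Σ (wᵢ + t vᵢ)` both converge with `s ≠ t`, then so does
the harmonic series `Σ vᵢ`. Hence every translate of that set is null for the measure. -/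

theorem ShyIn.of_null_lines {V : Type*} [TopologicalSpace V] [AddCommGroup V] [Module ℝ V]
    [ContinuousAdd V] [ContinuousSMul ℝ V] {S T : Set V} (hST : S ⊆ T)
    (hT : MeasurableSet[borel V] T) (v : V) (hv : ∀ w : V, volume {t : ℝ | t • v + w ∈ T} = 0) :
    ShyIn S := by
  let : MeasurableSpace V := borel V
  have : BorelSpace V := ⟨rfl⟩
  set f : ℝ → V := fun t => t • v
  have hf : Continuous f := continuous_id.smul continuous_const
  refine ⟨T, hST, hT, (volume.restrict (Icc 0 1)).map f, ?_, fun w => ?_⟩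
  · refine ⟨f '' Icc 0 1, isCompact_Icc.image hf, ?_, ?_⟩
    · calc (0 : ENNReal) < volume.restrict (Icc 0 1) (f ⁻¹' (f '' Icc 0 1)) := by
            rw [Measure.restrict_apply_superset (subset_preimage_image f _)]
            simp
        _ ≤ _ := Measure.le_map_apply hf.aemeasurable _
    · calc _ ≤ (volume.restrict (Icc (0 : ℝ) 1)).map f univ := measure_mono (subset_univ _)
        _ < ⊤ := by simp [Measure.map_apply hf.measurable MeasurableSet.univ]
  · have htrans : MeasurableSet ((· + w) '' T) := by
      rw [Set.image_add_right]
      exact hT.preimage (continuous_add_const _).measurable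
    rw [Measure.map_apply hf.measurable htrans, Set.image_add_right]
    exact nonpos_iff_eq_zero.mp ((Measure.restrict_apply_le _ _).trans (hv (-w)).le)

theorem memℓp_inv_nat_succ {p : ENNReal} (hp : 1 < p) :
    Memℓp (fun i : ℕ => ((i : ℝ) + 1)⁻¹) p := by
  -- `Memℓp` is monotone in the exponent, so it suffices to treat a finite one.
  set q : ENNReal := min p 2
  have hq : 1 < q.toReal := by
    rw [← ENNReal.toReal_one, ENNReal.toReal_lt_toReal ENNReal.one_ne_top
      ((min_le_right p 2).trans_lt ENNReal.ofNat_lt_top).ne]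
    exact lt_min hp ENNReal.one_lt_two
  refine Memℓp.of_exponent_ge (memℓp_gen ?_) (min_le_left p 2)
  refine ((summable_nat_add_iff (G := ℝ) 1).mpr (Real.summable_nat_rpow_inv.mpr hq)).congr
    fun i => ?_
  rw [Real.norm_of_nonneg (by positivity), Real.inv_rpow (by positivity)]
  push_cast
  rfl

theorem subsingleton_setOf_exists_tendsto_mul_add {α : Type*} {l : Filter α} {H B : α → ℝ}
    (hH : ¬ ∃ c, Tendsto H l (nhds c)) :
    {t : ℝ | ∃ c, Tendsto (fun n => t * H n + B n) l (nhds c)}.Subsingleton := by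
  rintro s ⟨c, hc⟩ t ⟨d, hd⟩
  by_contra hst
  refine hH ⟨(c - d) / (s - t), (hc.sub hd).div_const (s - t) |>.congr fun n => ?_⟩
  field_simp [sub_ne_zero.mpr hst]
  ring

/-- For `1 < p ≤ ∞`, the set of sequences `a ∈ ℓᵖ` whose series `Σ aᵢ` diverges
(the partial sums have no limit) is prevalent in `ℓᵖ`. -/
theorem stmt_11 (p : ENNReal) (hp : 1 < p) [Fact (1 ≤ p)] :
    PrevalentIn {a : lp (fun _ : ℕ => ℝ) p |
      ¬ ∃ l : ℝ, Tendsto (fun n => ∑ i ∈ Finset.range n, a i) atTop (nhds l)} := by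
  have hsum (n : ℕ) : Continuous fun a : lp (fun _ : ℕ => ℝ) p => ∑ i ∈ Finset.range n, a i :=
    continuous_finsetSum _ fun i _ => (continuous_apply i).comp lp.uniformContinuous_coe.continuous
  have hharmonic :
      ¬ ∃ c, Tendsto (fun n => ∑ i ∈ Finset.range n, ((i : ℝ) + 1)⁻¹) atTop (nhds c) :=
    fun ⟨c, hc⟩ => not_tendsto_nhds_of_tendsto_atTop
      (by simpa only [one_div] using Real.tendsto_sum_range_one_div_nat_succ_atTop) c hc
  borelize ↥(lp (fun _ : ℕ => ℝ) p)
  refine ShyIn.of_null_lines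
    (T := {a | ∃ l, Tendsto (fun n => ∑ i ∈ Finset.range n, a i) atTop (nhds l)})
    (fun a ha => not_not.mp ha)
    (measurableSet_exists_tendsto fun n => (hsum n).measurable)
    ⟨_, memℓp_inv_nat_succ hp⟩ fun w => Set.Subsingleton.measure_zero ?_ _
  refine (subsingleton_setOf_exists_tendsto_mul_add
    (B := fun n => ∑ i ∈ Finset.range n, w i) hharmonic).anti
    fun t ⟨c, hc⟩ => ⟨c, hc.congr fun n => ?_⟩
  rw [Finset.mul_sum, ← Finset.sum_add_distrib]
  rfl
end

section
/- For each positive integer k, almost every C^k function f : ℝ → ℝ (in the sense of prevalence) has the property that at each x ∈ ℝ, at most one of the derivatives f⁽⁰⁾(x), f⁽¹⁾(x), …, f⁽ᵏ⁾(x) is zero. -/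
open MeasureTheory Set

/-- The space `Cᵏ(ℝ)` of `k`-times continuously differentiable functions `ℝ → ℝ`,
as an additive group. -/
def Ck (k : ℕ) : AddSubgroup (ℝ → ℝ) where
  carrier := {f | ContDiff ℝ k f}
  add_mem' := fun {a b} ha hb => ContDiff.add (show ContDiff ℝ k a from ha) hb
  zero_mem' := show ContDiff ℝ k (fun _ => (0:ℝ)) from contDiff_const
  neg_mem' := fun {a} ha => ContDiff.neg (show ContDiff ℝ k a from ha)

/-- The topology of `Cᵏ`-uniform convergence on compact sets: induced by the map
`f ↦ (f, f', …, f⁽ᵏ⁾)` into `(C(ℝ,ℝ))^{k+1}` with the compact-open topologies. -/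
noncomputable instance (k : ℕ) : TopologicalSpace (Ck k) :=
  TopologicalSpace.induced
    (fun f : Ck k => fun i : Fin (k + 1) =>
      (⟨iteratedDeriv i f.1,
        (show ContDiff ℝ k f.1 from f.2).continuous_iteratedDeriv i
          (by exact_mod_cast Nat.lt_succ_iff.mp i.2)⟩ : C(ℝ, ℝ)))
    inferInstance

/-!
Polynomials of degree at most `k` form a probe. Fix `w ∈ Cᵏ` and `i₁ < i₂ ≤ k`, and let `p_c`
be the polynomial with coefficient vector `c`. If `x` is a common zero of `(p_c + w)⁽ⁱ¹⁾` and
`(p_c + w)⁽ⁱ²⁾`, replacing the coefficient `c_{i₁}` by `x` leaves the `i₂`-th derivative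
unchanged and produces a point of `N = {d | (p_d + w)⁽ⁱ²⁾(d_{i₁}) = 0}`. The coefficient `d_{i₂}`
enters this equation affinely with slope `i₂!`, so `N` meets each line parallel to the `i₂`-th
axis at most once and is null by Fubini; this only needs `w⁽ⁱ²⁾` to be measurable. Conversely `c`
is recovered from `d` by solving the `i₁`-equation for `c_{i₁}`, a map that is differentiable
because `w⁽ⁱ¹⁾` is, and differentiable self-maps of `ℝⁿ` preserve null sets.
-/

open Function

def polyOfCoeffs {n : ℕ} (c : Fin n → ℝ) (x : ℝ) : ℝ := ∑ j, c j * x ^ (j : ℕ)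

theorem contDiff_polyOfCoeffs {n : ℕ} (c : Fin n → ℝ) {m : WithTop ℕ∞} :
    ContDiff ℝ m (polyOfCoeffs c) := by
  unfold polyOfCoeffs
  fun_prop

theorem iteratedDeriv_polyOfCoeffs {n : ℕ} (c : Fin n → ℝ) (i : ℕ) (x : ℝ) :
    iteratedDeriv i (polyOfCoeffs c) x =
      ∑ j, c j * (j : ℕ).descFactorial i * x ^ ((j : ℕ) - i) := by
  unfold polyOfCoeffs
  rw [iteratedDeriv_fun_sum fun j _ => by fun_prop]
  simp [mul_assoc]

theorem iteratedDeriv_polyOfCoeffs_update {n : ℕ} (c : Fin n → ℝ) (i : ℕ) (j : Fin n)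
    (a x : ℝ) :
    iteratedDeriv i (polyOfCoeffs (update c j a)) x =
      iteratedDeriv i (polyOfCoeffs c) x +
        (a - c j) * (j : ℕ).descFactorial i * x ^ ((j : ℕ) - i) := by
  simp only [iteratedDeriv_polyOfCoeffs]
  rw [← Finset.add_sum_erase _ _ (Finset.mem_univ j),
    ← Finset.add_sum_erase _ _ (Finset.mem_univ j),
    Finset.sum_congr rfl fun l hl => by rw [update_of_ne (Finset.ne_of_mem_erase hl)]]
  simp only [update_self]
  ring

theorem volume_eq_zero_of_forall_update_mem {n : ℕ} (i : Fin (n + 1))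
    {N : Set (Fin (n + 1) → ℝ)} (hN : MeasurableSet N)
    (h : ∀ d ∈ N, ∀ a, update d i a ∈ N → a = d i) : volume N = 0 := by
  let e := MeasurableEquiv.piFinSuccAbove (fun _ : Fin (n + 1) => ℝ) i
  have he := (volume_preserving_piFinSuccAbove (fun _ : Fin (n + 1) => ℝ) i).symm
  rw [← he.measure_preimage hN.nullMeasurableSet, Measure.volume_eq_prod,
    Measure.prod_apply_symm (e.symm.measurable hN)]
  refine lintegral_eq_zero_of_ae_eq_zero (ae_of_all _ fun z => ?_)
  refine Subsingleton.measure_zero (fun y hy y' hy' => ?_) _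
  change Fin.insertNth i y z ∈ N at hy
  change Fin.insertNth i y' z ∈ N at hy'
  simpa using (h _ hy y' (by simpa using hy')).symm

theorem volume_setOf_exists_common_zero_eq_zero {n : ℕ} {i₁ i₂ : Fin (n + 1)} (h : i₁ < i₂)
    {w₁ w₂ : ℝ → ℝ} (hw₁ : Differentiable ℝ w₁) (hw₂ : Measurable w₂) :
    volume {c : Fin (n + 1) → ℝ | ∃ x, iteratedDeriv i₁ (polyOfCoeffs c) x + w₁ x = 0 ∧
      iteratedDeriv i₂ (polyOfCoeffs c) x + w₂ x = 0} = 0 := by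
  set N := {d : Fin (n + 1) → ℝ | iteratedDeriv i₂ (polyOfCoeffs d) (d i₁) + w₂ (d i₁) = 0}
  set H := fun d : Fin (n + 1) → ℝ =>
    d - ((iteratedDeriv i₁ (polyOfCoeffs d) (d i₁) + w₁ (d i₁)) / (i₁ : ℕ).factorial) •
      Pi.single i₁ 1
  have hfac (i : Fin (n + 1)) : ((i : ℕ).factorial : ℝ) ≠ 0 := by positivity
  have hN : volume N = 0 := by
    refine volume_eq_zero_of_forall_update_mem i₂ ?_ fun d hd a had => ?_
    · refine measurableSet_eq_fun ?_ measurable_const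
      simp only [iteratedDeriv_polyOfCoeffs]
      exact Measurable.add (by fun_prop) (hw₂.comp (measurable_pi_apply i₁))
    · simp only [N, mem_ofPred_eq, iteratedDeriv_polyOfCoeffs_update, update_of_ne h.ne,
        Nat.descFactorial_self, Nat.sub_self, pow_zero, mul_one] at hd had
      have : (a - d i₂) * (i₂ : ℕ).factorial = 0 := by linarith
      exact sub_eq_zero.1 ((mul_eq_zero.1 this).resolve_right (hfac i₂))
  have hH : Differentiable ℝ H := by
    simp only [H, iteratedDeriv_polyOfCoeffs]
    have : Differentiable ℝ fun d : Fin (n + 1) → ℝ => w₁ (d i₁) :=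
      hw₁.comp (differentiable_apply i₁)
    fun_prop
  refine measure_mono_null ?_ (addHaar_image_eq_zero_of_differentiableOn_of_addHaar_eq_zero _
    hH.differentiableOn hN)
  rintro c ⟨x, hx₁, hx₂⟩
  refine ⟨update c i₁ x, ?_, ?_⟩
  · simpa [N, iteratedDeriv_polyOfCoeffs_update, Nat.descFactorial_eq_zero_iff_lt.2 h] using hx₂
  · have : (iteratedDeriv i₁ (polyOfCoeffs (update c i₁ x)) x + w₁ x) / (i₁ : ℕ).factorial
        = x - c i₁ := by
      rw [iteratedDeriv_polyOfCoeffs_update, Nat.descFactorial_self, Nat.sub_self, pow_zero,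
        mul_one, add_right_comm, hx₁, zero_add, mul_div_cancel_right₀ _ (hfac i₁)]
    ext j
    rcases eq_or_ne j i₁ with rfl | hj
    · simp [H, this]
    · simp [H, hj]

theorem IsClosed.measurableSet_image_snd {X Y : Type*} [TopologicalSpace X] [SigmaCompactSpace X]
    [TopologicalSpace Y] [MeasurableSpace Y] [OpensMeasurableSpace Y] {Z : Set (X × Y)}
    (hZ : IsClosed Z) : MeasurableSet (Prod.snd '' Z) := by
  have hcover : Prod.snd '' Z = ⋃ m, Prod.snd '' (Z ∩ compactCovering X m ×ˢ univ) := by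
    rw [← image_iUnion, ← inter_iUnion, ← iUnion_prod_const, iUnion_compactCovering,
      univ_prod_univ, inter_univ]
  rw [hcover]
  refine MeasurableSet.iUnion fun m => IsClosed.measurableSet ?_
  have : CompactSpace (compactCovering X m) :=
    isCompact_iff_compactSpace.1 (isCompact_compactCovering X m)
  have hZ' : IsClosed {p : compactCovering X m × Y | ((p.1 : X), p.2) ∈ Z} :=
    hZ.preimage (continuous_subtype_val.prodMap continuous_id)
  convert isClosedMap_snd_of_compactSpace _ hZ' using 1
  ext y
  simp [and_comm]

theorem shyIn_of_forall_measure_preimage_add_eq_zero {V X : Type*} [TopologicalSpace V]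
    [AddCommGroup V] [ContinuousAdd V] [TopologicalSpace X] [MeasurableSpace X]
    [OpensMeasurableSpace X]
    (ν : Measure X) {K : Set X} [IsFiniteMeasureOnCompacts ν] (hK : IsCompact K) (hνK : 0 < ν K)
    {Φ : X → V} (hΦ : Continuous Φ) {S T : Set V} (hST : S ⊆ T)
    (hT : MeasurableSet[borel V] T) (hnull : ∀ v, ν ((Φ · + v) ⁻¹' T) = 0) : ShyIn S := by
  let _ : MeasurableSpace V := borel V
  have _ : BorelSpace V := ⟨rfl⟩
  have hΦm : Measurable Φ := hΦ.measurable
  refine ⟨T, hST, hT, (ν.restrict K).map Φ, ⟨Φ '' K, hK.image hΦ, ?_, ?_⟩, fun v => ?_⟩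
  · calc 0 < ν K := hνK
      _ = ν.restrict K K := by rw [Measure.restrict_apply_self]
      _ ≤ (ν.restrict K).map Φ (Φ '' K) := Measure.le_map_apply_image hΦm.aemeasurable K
  · calc (ν.restrict K).map Φ (Φ '' K) ≤ (ν.restrict K).map Φ univ := measure_mono (subset_univ _)
      _ < ⊤ := by
        rw [Measure.map_apply hΦm MeasurableSet.univ, preimage_univ, Measure.restrict_apply_univ]
        exact hK.measure_lt_top
  · rw [image_add_right, Measure.map_apply hΦm (hT.preimage (continuous_add_const _).measurable)]
    exact Measure.restrict_le_self.absolutelyContinuous (hnull (-v))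

namespace Ck

variable {k : ℕ}

theorem iteratedDeriv_add_apply {i : ℕ} (hi : i ≤ k) (f g : Ck k) (x : ℝ) :
    iteratedDeriv i (f + g).1 x = iteratedDeriv i f.1 x + iteratedDeriv i g.1 x :=
  iteratedDeriv_add ((show ContDiff ℝ k f.1 from f.2).of_le (by exact_mod_cast hi)).contDiffAt
    ((show ContDiff ℝ k g.1 from g.2).of_le (by exact_mod_cast hi)).contDiffAt

variable (k) in
noncomputable def derivs : Ck k →+ (Fin (k + 1) → C(ℝ, ℝ)) where
  toFun f i := ⟨iteratedDeriv i f.1,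
    (show ContDiff ℝ k f.1 from f.2).continuous_iteratedDeriv i
      (by exact_mod_cast Nat.lt_succ_iff.mp i.2)⟩
  map_zero' := by ext; simp
  map_add' f g := by ext i x; exact iteratedDeriv_add_apply (Nat.lt_succ_iff.mp i.2) f g x

theorem isInducing_derivs : Topology.IsInducing (derivs k) := ⟨rfl⟩

instance : IsTopologicalAddGroup (Ck k) :=
  isInducing_derivs.topologicalAddGroup (derivs k)

theorem continuous_iteratedDeriv_apply {i : ℕ} (hi : i ≤ k) :
    Continuous fun p : ℝ × Ck k => iteratedDeriv i p.2.1 p.1 :=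
  continuous_eval.comp
    (((continuous_apply (⟨i, Nat.lt_succ_of_le hi⟩ : Fin (k + 1))).comp
      (isInducing_derivs.continuous.comp continuous_snd)).prodMk continuous_fst)

theorem measurableSet_setOf_exists_common_zero [MeasurableSpace (Ck k)] [BorelSpace (Ck k)]
    {i₁ i₂ : ℕ} (h₁ : i₁ ≤ k) (h₂ : i₂ ≤ k) :
    MeasurableSet {f : Ck k | ∃ x, iteratedDeriv i₁ f.1 x = 0 ∧ iteratedDeriv i₂ f.1 x = 0} := by
  have hZ : IsClosed {p : ℝ × Ck k | iteratedDeriv i₁ p.2.1 p.1 = 0 ∧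
      iteratedDeriv i₂ p.2.1 p.1 = 0} :=
    (isClosed_eq (continuous_iteratedDeriv_apply h₁) continuous_const).inter
      (isClosed_eq (continuous_iteratedDeriv_apply h₂) continuous_const)
  convert hZ.measurableSet_image_snd using 1
  ext f
  simp

variable (k) in
noncomputable def ofCoeffs (c : Fin (k + 1) → ℝ) : Ck k :=
  ⟨polyOfCoeffs c, show ContDiff ℝ k _ from contDiff_polyOfCoeffs c⟩

@[simp]
theorem coe_ofCoeffs (c : Fin (k + 1) → ℝ) : (ofCoeffs k c : ℝ → ℝ) = polyOfCoeffs c := rfl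

theorem continuous_ofCoeffs : Continuous (ofCoeffs k) := by
  refine isInducing_derivs.continuous_iff.2 (continuous_pi fun i => ?_)
  refine ContinuousMap.continuous_of_continuous_uncurry _ ?_
  change Continuous fun p : (Fin (k + 1) → ℝ) × ℝ => iteratedDeriv i (polyOfCoeffs p.1) p.2
  simp only [iteratedDeriv_polyOfCoeffs]
  fun_prop

theorem volume_preimage_ofCoeffs_add_eq_zero (v : Ck k) {i₁ i₂ : Fin (k + 1)} (h : i₁ < i₂) :
    volume ((ofCoeffs k · + v) ⁻¹'
      {f | ∃ x, iteratedDeriv i₁ f.1 x = 0 ∧ iteratedDeriv i₂ f.1 x = 0}) = 0 := by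
  have hv : ContDiff ℝ k v.1 := v.2
  have h₂ : (i₂ : ℕ) ≤ k := Nat.lt_succ_iff.1 i₂.2
  have h₁ : (i₁ : ℕ) < k := lt_of_lt_of_le h h₂
  simp only [preimage_ofPred_eq, iteratedDeriv_add_apply h₁.le, iteratedDeriv_add_apply h₂,
    coe_ofCoeffs]
  exact volume_setOf_exists_common_zero_eq_zero h
    (hv.differentiable_iteratedDeriv _ (by exact_mod_cast h₁))
    (hv.continuous_iteratedDeriv _ (by exact_mod_cast h₂)).measurable

end Ck

theorem stmt_14_general (k : ℕ) :
    PrevalentIn {f : Ck k | ∀ x : ℝ, ∀ i₁ i₂ : ℕ, i₁ < i₂ → i₂ ≤ k →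
      iteratedDeriv i₁ f.1 x = 0 → iteratedDeriv i₂ f.1 x ≠ 0} := by
  let _ : MeasurableSpace (Ck k) := borel (Ck k)
  have _ : BorelSpace (Ck k) := ⟨rfl⟩
  let T : Set (Ck k) := ⋃ (i₁ : Fin (k + 1)) (i₂ : Fin (k + 1)) (_ : i₁ < i₂),
    {f | ∃ x, iteratedDeriv i₁ f.1 x = 0 ∧ iteratedDeriv i₂ f.1 x = 0}
  refine shyIn_of_forall_measure_preimage_add_eq_zero volume (isCompact_closedBall 0 1)
    (Metric.measure_closedBall_pos _ _ one_pos) Ck.continuous_ofCoeffs (T := T) ?_ ?_ fun v => ?_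
  · intro f hf
    simp only [mem_compl_iff, mem_ofPred_eq, not_forall, not_not] at hf
    obtain ⟨x, i₁, i₂, h, h₂, hx₁, hx₂⟩ := hf
    exact mem_iUnion₂.2 ⟨⟨i₁, by omega⟩, ⟨i₂, by omega⟩, mem_iUnion.2 ⟨h, x, hx₁, hx₂⟩⟩
  · exact .iUnion fun i₁ => .iUnion fun i₂ => .iUnion fun _ =>
      Ck.measurableSet_setOf_exists_common_zero (Nat.lt_succ_iff.1 i₁.2) (Nat.lt_succ_iff.1 i₂.2)
  · simp only [T, preimage_iUnion, measure_iUnion_null_iff]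
    exact fun i₁ i₂ h => Ck.volume_preimage_ofCoeffs_add_eq_zero v h

/-- For each positive integer `k`, almost every `Cᵏ` function `f : ℝ → ℝ` (in the
sense of prevalence) has the property that at each `x ∈ ℝ` at most one of
`f(x), f'(x), …, f⁽ᵏ⁾(x)` is zero. -/
theorem stmt_14 (k : ℕ) (hk : 1 ≤ k) :
    PrevalentIn {f : Ck k | ∀ x : ℝ, ∀ i₁ i₂ : ℕ, i₁ < i₂ → i₂ ≤ k →
      iteratedDeriv i₁ f.1 x = 0 → iteratedDeriv i₂ f.1 x ≠ 0} :=
  stmt_14_general k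
end

section
/- Let p ≥ 1 and let x₁,…,x_p be distinct points in ℝⁿ. Then for any prescribed values c₁,…,c_p ∈ ℝ and gradient vectors v₁,…,v_p ∈ ℝⁿ, there exists a polynomial q : ℝⁿ → ℝ of degree at most 2p − 1 with q(x_j) = c_j and ∇q(x_j) = v_j for all j = 1,…,p. -/
open MvPolynomial

/-- Hermite-type interpolation: given `p` distinct points in `ℝⁿ` and prescribed
values and gradients at these points, there is a polynomial of degree at most
`2p − 1` achieving them. -/
theorem stmt_17 (n p : ℕ) (hp : 1 ≤ p) (x : Fin p → (Fin n → ℝ))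
    (hx : Function.Injective x) (c : Fin p → ℝ) (v : Fin p → (Fin n → ℝ)) :
    ∃ q : MvPolynomial (Fin n) ℝ, q.totalDegree ≤ 2 * p - 1 ∧
      (∀ j, eval (x j) q = c j) ∧
      (∀ j k, eval (x j) (pderiv k q) = v j k) := by
  classical
  -- the basic squared-distance factors
  set F : Fin p → MvPolynomial (Fin n) ℝ :=
    fun i => ∑ m, (X m - C (x i m)) ^ 2 with hF
  have evalF : ∀ (y : Fin n → ℝ) i, eval y (F i) = ∑ m, (y m - x i m) ^ 2 := by
    intro y i; simp [hF]
  have evalF_self : ∀ i, eval (x i) (F i) = 0 := by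
    intro i; simp [evalF]
  have evalF_pos : ∀ i j, i ≠ j → 0 < eval (x j) (F i) := by
    intro i j hij
    rw [evalF]
    have hne : x j ≠ x i := fun h => hij (hx h).symm
    obtain ⟨m, hm⟩ := Function.ne_iff.mp hne
    exact Finset.sum_pos' (fun m _ => sq_nonneg _)
      ⟨m, Finset.mem_univ m, by have := sub_ne_zero_of_ne hm; positivity⟩
  have evalpF : ∀ (y : Fin n → ℝ) k i,
      eval y (pderiv k (F i)) = 2 * (y k - x i k) := by
    intro y k i
    rw [hF, map_sum]
    rw [Finset.sum_eq_single k]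
    · simp [pderiv_pow, pderiv_mul]
      try ring
    · intro m _ hm
      simp [pderiv_pow, pderiv_mul, pderiv_X_of_ne hm]
    · simp
  have degF : ∀ i, (F i).totalDegree ≤ 2 := by
    intro i
    apply totalDegree_finsetSum_le
    intro m _
    calc ((X m - C (x i m)) ^ 2).totalDegree ≤ 2 * (X m - C (x i m)).totalDegree :=
          totalDegree_pow _ _
      _ ≤ 2 * 1 := by
          gcongr
          refine (totalDegree_sub_C_le _ _).trans ?_
          simp
      _ = 2 := by norm_num
  -- the products
  set P : Fin p → MvPolynomial (Fin n) ℝ :=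
    fun j => ∏ i ∈ Finset.univ.erase j, F i with hP
  have evalP_zero : ∀ i j, i ≠ j → eval (x i) (P j) = 0 := by
    intro i j hij
    rw [hP, map_prod]
    exact Finset.prod_eq_zero (Finset.mem_erase.mpr ⟨hij, Finset.mem_univ _⟩)
      (evalF_self i)
  have E_pos : ∀ j, 0 < eval (x j) (P j) := by
    intro j
    rw [hP, map_prod]
    exact Finset.prod_pos fun i hi => evalF_pos i j (Finset.mem_erase.mp hi).1
  have evalpP_zero : ∀ i j k, i ≠ j → eval (x i) (pderiv k (P j)) = 0 := by
    intro i j k hij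
    have hi : i ∈ Finset.univ.erase j := Finset.mem_erase.mpr ⟨hij, Finset.mem_univ _⟩
    simp only [hP]
    rw [← Finset.mul_prod_erase _ _ hi, pderiv_mul, map_add, map_mul, map_mul,
      evalF_self i, evalpF]
    simp
  have degP : ∀ j, (P j).totalDegree ≤ 2 * (p - 1) := by
    intro j
    rw [hP]
    refine (totalDegree_finset_prod _ _).trans ?_
    calc ∑ i ∈ Finset.univ.erase j, (F i).totalDegree
        ≤ ∑ _i ∈ Finset.univ.erase j, 2 := Finset.sum_le_sum fun i _ => degF i
      _ = (Finset.univ.erase j).card * 2 := by rw [Finset.sum_const, smul_eq_mul]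
      _ = 2 * (p - 1) := by
          rw [Finset.card_erase_of_mem (Finset.mem_univ j)]
          simp [Finset.card_univ, mul_comm]
  -- the coefficients
  set E : Fin p → ℝ := fun j => eval (x j) (P j) with hE
  set D : Fin p → Fin n → ℝ := fun j k => eval (x j) (pderiv k (P j)) with hD
  have hEne : ∀ j, E j ≠ 0 := fun j => (E_pos j).ne'
  set α : Fin p → ℝ := fun j => c j / E j with hα
  set β : Fin p → Fin n → ℝ := fun j k => (v j k - α j * D j k) / E j with hβ
  -- the linear correction factors
  set L : Fin p → MvPolynomial (Fin n) ℝ :=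
    fun j => C (α j) + ∑ k, C (β j k) * (X k - C (x j k)) with hL
  have evalL_self : ∀ j, eval (x j) (L j) = α j := by
    intro j; simp [hL]
  have evalpL : ∀ j k, eval (x j) (pderiv k (L j)) = β j k := by
    intro j k
    rw [hL, map_add, pderiv_C, map_sum]
    rw [Finset.sum_eq_single k]
    · simp [pderiv_mul]
    · intro m _ hm
      simp [pderiv_mul, pderiv_X_of_ne hm]
    · simp
  have degL : ∀ j, (L j).totalDegree ≤ 1 := by
    intro j
    rw [hL]
    refine (totalDegree_add _ _).trans (max_le (by simp) ?_)
    apply totalDegree_finsetSum_le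
    intro k _
    refine (totalDegree_mul _ _).trans ?_
    have h1 : (C (β j k) : MvPolynomial (Fin n) ℝ).totalDegree = 0 := totalDegree_C _
    have h2 : (X k - C (x j k) : MvPolynomial (Fin n) ℝ).totalDegree ≤ 1 :=
      (totalDegree_sub_C_le _ _).trans (by simp)
    omega
  refine ⟨∑ j, P j * L j, ?_, ?_, ?_⟩
  · apply totalDegree_finsetSum_le
    intro j _
    refine (totalDegree_mul _ _).trans ?_
    have := degP j
    have := degL j
    omega
  · intro j
    rw [map_sum, Finset.sum_eq_single j]
    · rw [map_mul, evalL_self]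
      show E j * α j = c j
      rw [hα]
      field_simp
      rw [mul_comm, mul_div_assoc, div_self (hEne j), mul_one]
    · intro i _ hij
      rw [map_mul, evalP_zero j i (Ne.symm hij), zero_mul]
    · simp
  · intro j k
    rw [map_sum, map_sum, Finset.sum_eq_single j]
    · rw [pderiv_mul, map_add, map_mul, map_mul, evalL_self, evalpL]
      show D j k * α j + E j * β j k = v j k
      simp only [hβ]
      rw [mul_comm (E j), div_mul_cancel₀ _ (hEne j)]
      ring
    · intro i _ hij
      rw [pderiv_mul, map_add, map_mul, map_mul,
        evalP_zero j i (Ne.symm hij), evalpP_zero j i k (Ne.symm hij)]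
      ring
    · simp
end

section
/- Define the relative-prevalence lower density ρ⁻(S) = sup over compactly supported Borel probability measures μ of inf over v ∈ V of μ(S+v), and upper density ρ⁺(S) = inf over μ of sup over v of μ(S+v). Then for every Borel set S ⊆ V and all compactly supported Borel probability measures μ, ν: inf_v μ(S+v) ≤ inf_v (μ*ν)(S+v) ≤ sup_v (μ*ν)(S+v) ≤ sup_v ν(S+v); consequently 0 ≤ ρ⁻(S) ≤ ρ⁺(S) ≤ 1. -/
/-!
By Fubini, `(μ * ν)(S + v) = ∫ μ(S + v - y) dν(y) = ∫ ν(S + v - x) dμ(x)`, an average of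
translates of `μ(S)` (resp. `ν(S)`), hence bounded below by their infimum and above by their
supremum. Since `V` need not be separable, addition is not measurable for the product
σ-algebra on `V × V`; it is only almost everywhere measurable, because compactly supported
measures live on separable sets. Finally `ρ⁺ ≤ 1` is witnessed by a Dirac mass.
-/

open MeasureTheory Set

variable (V : Type*) [AddCommGroup V] [Module ℝ V] [MetricSpace V] [CompleteSpace V]
  [IsTopologicalAddGroup V] [ContinuousSMul ℝ V] [MeasurableSpace V] [BorelSpace V]

/-- The class of compactly supported Borel probability measures on `V`. -/
def CPProb : Set (Measure V) :=
  {μ | IsProbabilityMeasure μ ∧ ∃ K : Set V, IsCompact K ∧ μ Kᶜ = 0}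

variable {V}

/-- The convolution `μ*ν`, defined by `μ*ν(S) = (μ × ν){(x,y) : x + y ∈ S}`. -/
noncomputable def conv (μ ν : Measure V) : Measure V :=
  (μ.prod ν).map (fun p : V × V => p.1 + p.2)

variable (V)

/-- The relative-prevalence lower density of a set. -/
noncomputable def lowerDensity (S : Set V) : ENNReal :=
  ⨆ μ ∈ CPProb V, ⨅ v : V, μ ((fun x => x + v) '' S)

/-- The relative-prevalence upper density of a set. -/
noncomputable def upperDensity (S : Set V) : ENNReal :=
  ⨅ μ ∈ CPProb V, ⨆ v : V, μ ((fun x => x + v) '' S)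

section AEMeasurableAdd

variable {G : Type*} [TopologicalSpace G] [TopologicalSpace.PseudoMetrizableSpace G]
  [MeasurableSpace G] [BorelSpace G]

theorem aestronglyMeasurable_id_of_measure_compl_eq_zero {μ : Measure G} {K : Set G}
    (hK : TopologicalSpace.IsSeparable K) (hμK : μ Kᶜ = 0) : AEStronglyMeasurable id μ :=
  aestronglyMeasurable_iff_aemeasurable_separable.2
    ⟨aemeasurable_id, K, hK, (measure_eq_zero_iff_ae_notMem.1 hμK).mono fun _ => not_not.1⟩

theorem aemeasurable_add_prod [Add G] [ContinuousAdd G] {μ ν : Measure G}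
    (hμ : AEStronglyMeasurable id μ) (hν : AEStronglyMeasurable id ν) :
    AEMeasurable (fun p : G × G => p.1 + p.2) (μ.prod ν) :=
  (continuous_add.comp_aestronglyMeasurable
    ((hμ.comp_quasiMeasurePreserving Measure.quasiMeasurePreserving_fst).prodMk
      (hν.comp_quasiMeasurePreserving Measure.quasiMeasurePreserving_snd))).aemeasurable

end AEMeasurableAdd

section CPProb

variable {G : Type*} [MetricSpace G] [MeasurableSpace G]

theorem aestronglyMeasurable_id_of_mem_CPProb [BorelSpace G] {μ : Measure G}
    (hμ : μ ∈ CPProb G) : AEStronglyMeasurable id μ :=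
  let ⟨_, _, hK, hμK⟩ := hμ
  aestronglyMeasurable_id_of_measure_compl_eq_zero hK.isSeparable hμK

theorem dirac_mem_CPProb [MeasurableSingletonClass G] (a : G) : Measure.dirac a ∈ CPProb G :=
  ⟨inferInstance, {a}, isCompact_singleton, by simp⟩

end CPProb

section Translate

variable {G : Type*} [AddCommGroup G]

theorem preimage_add_const_image_add_const (S : Set G) (v y : G) :
    (· + y) ⁻¹' ((· + v) '' S) = (· + (v - y)) '' S := by
  simp only [image_add_right, preimage_preimage]
  congr 1
  funext x
  abel

theorem MeasurableSet.image_add_const [MeasurableSpace G] [MeasurableAdd G] {S : Set G}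
    (hS : MeasurableSet S) (v : G) : MeasurableSet ((· + v) '' S) := by
  rw [image_add_right]
  exact hS.preimage (measurable_add_const _)

end Translate

section Conv

variable {G : Type*} [AddCommGroup G] [MeasurableSpace G] [MeasurableAdd G] {μ ν : Measure G}

theorem conv_apply_eq_lintegral_fst [SFinite ν]
    (hadd : AEMeasurable (fun p : G × G => p.1 + p.2) (μ.prod ν)) {T : Set G}
    (hT : MeasurableSet T) : conv μ ν T = ∫⁻ x, ν ((· + x) ⁻¹' T) ∂μ := by
  have hind : Measurable (T.indicator (1 : G → ENNReal)) := measurable_one.indicator hT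
  rw [← lintegral_indicator_one hT, conv, lintegral_map' hind.aemeasurable hadd,
    lintegral_prod (fun p => T.indicator 1 (p.1 + p.2)) (hind.comp_aemeasurable hadd)]
  refine lintegral_congr fun x => ?_
  rw [← lintegral_indicator_one (hT.preimage (measurable_add_const x))]
  refine lintegral_congr fun y => ?_
  rw [add_comm]
  rfl

theorem conv_apply_eq_lintegral_snd [SFinite μ] [SFinite ν]
    (hadd : AEMeasurable (fun p : G × G => p.1 + p.2) (μ.prod ν)) {T : Set G}
    (hT : MeasurableSet T) : conv μ ν T = ∫⁻ y, μ ((· + y) ⁻¹' T) ∂ν := by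
  have hind : Measurable (T.indicator (1 : G → ENNReal)) := measurable_one.indicator hT
  rw [← lintegral_indicator_one hT, conv, lintegral_map' hind.aemeasurable hadd,
    lintegral_prod_symm (fun p => T.indicator 1 (p.1 + p.2)) (hind.comp_aemeasurable hadd)]
  refine lintegral_congr fun y => ?_
  rw [← lintegral_indicator_one (hT.preimage (measurable_add_const y))]
  rfl

theorem iInf_measure_image_add_const_le_conv [SFinite μ] [IsProbabilityMeasure ν]
    (hadd : AEMeasurable (fun p : G × G => p.1 + p.2) (μ.prod ν)) {S : Set G}
    (hS : MeasurableSet S) (v : G) :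
    ⨅ w, μ ((· + w) '' S) ≤ conv μ ν ((· + v) '' S) :=
  calc ⨅ w, μ ((· + w) '' S)
      = ∫⁻ _, ⨅ w, μ ((· + w) '' S) ∂ν := by rw [lintegral_const, measure_univ, mul_one]
    _ ≤ ∫⁻ y, μ ((· + (v - y)) '' S) ∂ν := lintegral_mono fun y => iInf_le _ (v - y)
    _ = conv μ ν ((· + v) '' S) := by
      simp only [conv_apply_eq_lintegral_snd hadd (hS.image_add_const v),
        preimage_add_const_image_add_const]

theorem conv_le_iSup_measure_image_add_const [IsProbabilityMeasure μ] [SFinite ν]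
    (hadd : AEMeasurable (fun p : G × G => p.1 + p.2) (μ.prod ν)) {S : Set G}
    (hS : MeasurableSet S) (v : G) :
    conv μ ν ((· + v) '' S) ≤ ⨆ w, ν ((· + w) '' S) :=
  calc conv μ ν ((· + v) '' S)
      = ∫⁻ x, ν ((· + (v - x)) '' S) ∂μ := by
        simp only [conv_apply_eq_lintegral_fst hadd (hS.image_add_const v),
          preimage_add_const_image_add_const]
    _ ≤ ∫⁻ _, ⨆ w, ν ((· + w) '' S) ∂μ := lintegral_mono fun x => le_iSup_of_le (v - x) le_rfl
    _ = ⨆ w, ν ((· + w) '' S) := by rw [lintegral_const, measure_univ, mul_one]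

end Conv

theorem translate_bounds_conv_of_mem_CPProb {G : Type*} [AddCommGroup G] [MetricSpace G]
    [ContinuousAdd G] [MeasurableSpace G] [BorelSpace G] {S : Set G} (hS : MeasurableSet S)
    {μ ν : Measure G} (hμ : μ ∈ CPProb G) (hν : ν ∈ CPProb G) :
    (⨅ v, μ ((· + v) '' S)) ≤ (⨅ v, conv μ ν ((· + v) '' S)) ∧
      (⨅ v, conv μ ν ((· + v) '' S)) ≤ (⨆ v, conv μ ν ((· + v) '' S)) ∧
      (⨆ v, conv μ ν ((· + v) '' S)) ≤ (⨆ v, ν ((· + v) '' S)) := by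
  have := hμ.1
  have := hν.1
  have hadd := aemeasurable_add_prod (aestronglyMeasurable_id_of_mem_CPProb hμ)
    (aestronglyMeasurable_id_of_mem_CPProb hν)
  exact ⟨le_iInf (iInf_measure_image_add_const_le_conv hadd hS), iInf_le_iSup,
    iSup_le (conv_le_iSup_measure_image_add_const hadd hS)⟩

/-- For every Borel set `S` and all compactly supported Borel probability measures
`μ, ν`: `inf_v μ(S+v) ≤ inf_v (μ*ν)(S+v) ≤ sup_v (μ*ν)(S+v) ≤ sup_v ν(S+v)`;
consequently `0 ≤ ρ⁻(S) ≤ ρ⁺(S) ≤ 1`. -/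
theorem stmt_19 (S : Set V) (hS : MeasurableSet S) :
    (∀ μ ∈ CPProb V, ∀ ν ∈ CPProb V,
      (⨅ v : V, μ ((fun x => x + v) '' S)) ≤ (⨅ v : V, conv μ ν ((fun x => x + v) '' S)) ∧
      (⨅ v : V, conv μ ν ((fun x => x + v) '' S)) ≤ (⨆ v : V, conv μ ν ((fun x => x + v) '' S)) ∧
      (⨆ v : V, conv μ ν ((fun x => x + v) '' S)) ≤ (⨆ v : V, ν ((fun x => x + v) '' S))) ∧
    0 ≤ lowerDensity V S ∧ lowerDensity V S ≤ upperDensity V S ∧ upperDensity V S ≤ 1 := by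
  have chain := fun μ (hμ : μ ∈ CPProb V) ν (hν : ν ∈ CPProb V) =>
    translate_bounds_conv_of_mem_CPProb hS hμ hν
  refine ⟨chain, zero_le, ?_, ?_⟩
  · refine iSup₂_le fun μ hμ => le_iInf₂ fun ν hν => ?_
    obtain ⟨hinf, hinf_sup, hsup⟩ := chain μ hμ ν hν
    exact hinf.trans (hinf_sup.trans hsup)
  · exact iInf₂_le_of_le _ (dirac_mem_CPProb 0) (iSup_le fun _ => prob_le_one)
end
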